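/- Let G be a finite abelian group, ⟨·,·⟩ a non-degenerate symmetric pairing on G, and q a quadratic form on G realizing ⟨·,·⟩. Equip G×G with the non-degenerate pairing ⟨(g,h),(g',h')⟩₂ := ⟨g,g'⟩·conj(⟨h,h'⟩) and set q₂(g,h) := q(g)·conj(q(h)). For a subgroup H ≤ G×G write H^⊥ = {x ∈ G×G : ⟨x,y⟩₂ = 1 for all y ∈ H}, and for D ≤ G write D^⊥ = {k ∈ G : ⟨k,d⟩ = 1 for all d ∈ D}. (If q is identically 1 on D ≤ G, then D ⊆ D^⊥ and q is constant on each coset of D contained in D^⊥, so q descends to D^⊥/D.) Then the assignment Z ↦ (D₊, D₋, σ), where D₊ = {g ∈ G : (g,0) ∈ Z}, D₋ = {h ∈ G : (0,h) ∈ Z}, and σ(g + D₊) = h + D₋ whenever (g,h) ∈ Z, is a well-defined bijection from the set of subgroups Z ≤ G×G satisfying Z^⊥ = Z and q₂ identically 1 on Z, onto the set of triples (D₊, D₋, σ) where D₊, D₋ ≤ G are subgroups on which q is identically 1 and σ : D₊^⊥/D₊ → D₋^⊥/D₋ is a group isomorphism satisfying q(σ(k + D₊)) = q(k) for all k ∈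 D₊^⊥; its inverse sends (D₊, D₋, σ) to Z = {(g,h) ∈ D₊^⊥ × D₋^⊥ : σ(g + D₊) = h + D₋}. -/

import Mathlib

/-!
Finite duality `H^⊥⊥ = H` (a character-sum count gives `|H^⊥| · |H| = |G|`) shows that a
Lagrangian `Z ≤ G × G` projects onto `D₊^⊥` and `D₋^⊥`, where `D₊ × 0` and `0 × D₋` are its
intersections with the axes. Goursat's lemma then makes `Z` the graph of an isomorphism
`D₊^⊥/D₊ ≃ D₋^⊥/D₋`, which preserves `q` because `q₂ = 1` on `Z`. Conversely, by polarization
the graph of a `q`-preserving `σ` is isotropic, and it is coisotropic because its projections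
are `D_±^⊥` and its intersections with the axes are `D_±`.
-/

open ComplexConjugate

/-- A `𝕋`-valued pairing on `G`: multiplicative in each argument. -/
def IsPairing {G : Type*} [AddCommGroup G] (γ : G → G → ℂ) : Prop :=
  (∀ g h, ‖γ g h‖ = 1) ∧
    (∀ g g' h, γ (g + g') h = γ g h * γ g' h) ∧
    (∀ g h h', γ g (h + h') = γ g h * γ g h')

theorem IsPairing.ne_zero {G : Type*} [AddCommGroup G] {γ : G → G → ℂ}
    (hγ : IsPairing γ) (g h : G) : γ g h ≠ 0 := by
  intro h0
  have h1 := hγ.1 g h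
  rw [h0] at h1
  simp at h1

theorem IsPairing.zero_left {G : Type*} [AddCommGroup G] {γ : G → G → ℂ}
    (hγ : IsPairing γ) (h : G) : γ 0 h = 1 := by
  have h1 : γ (0 + 0) h = γ 0 h * γ 0 h := hγ.2.1 0 0 h
  rw [add_zero] at h1
  exact (mul_left_cancel₀ (hγ.ne_zero 0 h) (by rw [mul_one]; exact h1)).symm

theorem IsPairing.neg_left {G : Type*} [AddCommGroup G] {γ : G → G → ℂ}
    (hγ : IsPairing γ) {g : G} (h : G) (hg : γ g h = 1) : γ (-g) h = 1 := by
  have h1 : γ (-g + g) h = γ (-g) h * γ g h := hγ.2.1 (-g) g h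
  rw [neg_add_cancel, hγ.zero_left, hg, mul_one] at h1
  exact h1.symm

/-- The subgroup `D^⊥ = {k : γ(k,d) = 1 ∀ d ∈ D}`. -/
def perp {G : Type*} [AddCommGroup G] (γ : G → G → ℂ) (hγ : IsPairing γ)
    (D : AddSubgroup G) : AddSubgroup G where
  carrier := {k | ∀ d ∈ D, γ k d = 1}
  zero_mem' := fun d _ => hγ.zero_left d
  add_mem' := by
    intro a b ha hb d hd
    rw [hγ.2.1 a b d, ha d hd, hb d hd, mul_one]
  neg_mem' := by
    intro a ha d hd
    exact hγ.neg_left d (ha d hd)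

/-- The pairing `⟨(g,h),(g',h')⟩₂ = ⟨g,g'⟩ · conj ⟨h,h'⟩` on `G × G`. -/
noncomputable def pairTwo {G : Type*} [AddCommGroup G] (γ : G → G → ℂ) :
    G × G → G × G → ℂ :=
  fun x y => γ x.1 y.1 * conj (γ x.2 y.2)

theorem IsPairing.pairTwo {G : Type*} [AddCommGroup G] {γ : G → G → ℂ}
    (hγ : IsPairing γ) : IsPairing (_root_.pairTwo γ) := by
  refine ⟨?_, ?_, ?_⟩
  · intro g h
    show ‖γ g.1 h.1 * conj (γ g.2 h.2)‖ = 1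
    rw [norm_mul, Complex.norm_conj, hγ.1, hγ.1, mul_one]
  · intro g g' h
    show γ (g + g').1 h.1 * conj (γ (g + g').2 h.2) =
      (γ g.1 h.1 * conj (γ g.2 h.2)) * (γ g'.1 h.1 * conj (γ g'.2 h.2))
    rw [Prod.fst_add, Prod.snd_add, hγ.2.1, hγ.2.1, map_mul]
    ring
  · intro g h h'
    show γ g.1 (h + h').1 * conj (γ g.2 (h + h').2) =
      (γ g.1 h.1 * conj (γ g.2 h.2)) * (γ g.1 h'.1 * conj (γ g.2 h'.2))
    rw [Prod.fst_add, Prod.snd_add, hγ.2.2, hγ.2.2, map_mul]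
    ring

/-- `q` is a quadratic form realizing the pairing `γ`. -/
def Realizes {G : Type*} [AddCommGroup G] (q : G → ℂ) (γ : G → G → ℂ) : Prop :=
  (∀ g, ‖q g‖ = 1) ∧ (∀ g, q (-g) = q g) ∧
    ∀ g h, γ g h = q g * q h * conj (q (g + h))

/-- The discriminant quotient `D^⊥ / D`. -/
abbrev discQuot {G : Type*} [AddCommGroup G] (γ : G → G → ℂ) (hγ : IsPairing γ)
    (D : AddSubgroup G) :=
  perp γ hγ D ⧸ D.addSubgroupOf (perp γ hγ D)

namespace AddSubgroup

variable {A B : Type*} [AddCommGroup A] [AddCommGroup B]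

section QuotientGraph

variable {P D₁ : AddSubgroup A} {Q D₂ : AddSubgroup B}

def quotientGraph (σ : P ⧸ D₁.addSubgroupOf P ≃+ Q ⧸ D₂.addSubgroupOf Q) :
    AddSubgroup (A × B) :=
  ((σ : P ⧸ D₁.addSubgroupOf P →+ Q ⧸ D₂.addSubgroupOf Q).graph.comap
    ((QuotientAddGroup.mk' _).prodMap (QuotientAddGroup.mk' _))).map
    (P.subtype.prodMap Q.subtype)

variable {σ : P ⧸ D₁.addSubgroupOf P ≃+ Q ⧸ D₂.addSubgroupOf Q}

theorem mem_quotientGraph {g : A} {h : B} :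
    (g, h) ∈ quotientGraph σ ↔ ∃ (hg : g ∈ P) (hh : h ∈ Q),
      σ (QuotientAddGroup.mk ⟨g, hg⟩) = QuotientAddGroup.mk ⟨h, hh⟩ := by
  simp [quotientGraph, AddMonoidHom.mem_graph]

theorem map_fst_quotientGraph : (quotientGraph σ).map (AddMonoidHom.fst A B) = P := by
  ext g
  simp only [mem_map, AddMonoidHom.coe_fst, Prod.exists, exists_and_right, exists_eq_right,
    mem_quotientGraph]
  refine ⟨fun ⟨_, hg, _⟩ => hg, fun hg => ?_⟩
  obtain ⟨⟨h, hh⟩, hσ⟩ := QuotientAddGroup.mk_surjective (σ (QuotientAddGroup.mk ⟨g, hg⟩))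
  exact ⟨h, hg, hh, hσ.symm⟩

theorem map_snd_quotientGraph : (quotientGraph σ).map (AddMonoidHom.snd A B) = Q := by
  ext h
  simp only [mem_map, AddMonoidHom.coe_snd, Prod.exists, exists_eq_right, mem_quotientGraph]
  refine ⟨fun ⟨_, _, hh, _⟩ => hh, fun hh => ?_⟩
  obtain ⟨⟨g, hg⟩, hσ⟩ := QuotientAddGroup.mk_surjective (σ.symm (QuotientAddGroup.mk ⟨h, hh⟩))
  exact ⟨g, hg, hh, by rw [hσ, AddEquiv.apply_symm_apply]⟩

theorem comap_inl_quotientGraph (hD : D₁ ≤ P) :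
    (quotientGraph σ).comap (AddMonoidHom.inl A B) = D₁ := by
  ext g
  simpa [mem_quotientGraph, ← ZeroMemClass.zero_def, mem_addSubgroupOf] using @hD g

theorem comap_inr_quotientGraph (hD : D₂ ≤ Q) :
    (quotientGraph σ).comap (AddMonoidHom.inr A B) = D₂ := by
  ext g
  simpa [mem_quotientGraph, ← ZeroMemClass.zero_def, mem_addSubgroupOf,
    eq_comm (a := (0 : Q ⧸ _))] using @hD g

theorem le_quotientGraph_iff {Z : AddSubgroup (A × B)} (hP : Z.map (AddMonoidHom.fst A B) ≤ P)
    (hQ : Z.map (AddMonoidHom.snd A B) ≤ Q) :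
    Z ≤ quotientGraph σ ↔ ∀ (g : A) (h : B) (_ : (g, h) ∈ Z) (hg : g ∈ P) (hh : h ∈ Q),
      σ (QuotientAddGroup.mk ⟨g, hg⟩) = QuotientAddGroup.mk ⟨h, hh⟩ := by
  refine ⟨fun hZ g h hgh _ _ => ?_, fun hσ ⟨g, h⟩ hgh => ?_⟩
  · obtain ⟨_, _, hσ⟩ := mem_quotientGraph.1 (hZ hgh)
    exact hσ
  · exact mem_quotientGraph.2 ⟨hP ⟨_, hgh, rfl⟩, hQ ⟨_, hgh, rfl⟩, hσ g h hgh _ _⟩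

theorem quotientGraph_injective :
    Function.Injective (quotientGraph (P := P) (D₁ := D₁) (Q := Q) (D₂ := D₂)) := by
  intro σ τ hστ
  ext x
  induction x using QuotientAddGroup.induction_on with | H x =>
  obtain ⟨⟨h, hh⟩, hσ⟩ := QuotientAddGroup.mk_surjective (σ x)
  have hτ : (x.1, h) ∈ quotientGraph τ := hστ ▸ mem_quotientGraph.2 ⟨x.2, hh, hσ.symm⟩
  obtain ⟨_, _, hτ⟩ := mem_quotientGraph.1 hτ
  rw [← hσ, hτ]

end QuotientGraph

section Goursat

variable {Z : AddSubgroup (A × B)}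

theorem fst_mem_comap_inl_iff {w : A × B} (hw : w ∈ Z) :
    w.1 ∈ Z.comap (AddMonoidHom.inl A B) ↔ w.2 ∈ Z.comap (AddMonoidHom.inr A B) := by
  obtain ⟨a, b⟩ := w
  simp only [mem_comap, AddMonoidHom.inl_apply, AddMonoidHom.inr_apply]
  constructor <;> intro h
  · simpa using sub_mem hw h
  · simpa using sub_mem hw h

variable {P : AddSubgroup A} {Q : AddSubgroup B}

theorem eq_quotientGraph_of_le
    {σ : P ⧸ (Z.comap (AddMonoidHom.inl A B)).addSubgroupOf P ≃+
      Q ⧸ (Z.comap (AddMonoidHom.inr A B)).addSubgroupOf Q}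
    (hP : P ≤ Z.map (AddMonoidHom.fst A B)) (hZ : Z ≤ quotientGraph σ) :
    Z = quotientGraph σ := by
  refine le_antisymm hZ ?_
  rintro ⟨g, h⟩ hgh
  obtain ⟨hg, hh, hσ⟩ := mem_quotientGraph.1 hgh
  obtain ⟨⟨_, h₀⟩, hgh₀, rfl⟩ := hP hg
  obtain ⟨_, hh₀, hσ₀⟩ := mem_quotientGraph.1 (hZ hgh₀)
  have hdiff : (0, -h₀ + h) ∈ Z := by
    have := QuotientAddGroup.eq.1 (hσ₀.symm.trans hσ)
    rwa [mem_addSubgroupOf] at this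
  simpa using add_mem hgh₀ hdiff

theorem eq_quotientGraph_iff (hP : Z.map (AddMonoidHom.fst A B) = P)
    (hQ : Z.map (AddMonoidHom.snd A B) = Q)
    {σ : P ⧸ (Z.comap (AddMonoidHom.inl A B)).addSubgroupOf P ≃+
      Q ⧸ (Z.comap (AddMonoidHom.inr A B)).addSubgroupOf Q} :
    Z = quotientGraph σ ↔ ∀ (g : A) (h : B) (_ : (g, h) ∈ Z) (hg : g ∈ P) (hh : h ∈ Q),
      σ (QuotientAddGroup.mk ⟨g, hg⟩) = QuotientAddGroup.mk ⟨h, hh⟩ := by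
  rw [← le_quotientGraph_iff hP.le hQ.le]
  exact ⟨fun hZ => hZ.le, eq_quotientGraph_of_le hP.ge⟩

theorem exists_eq_quotientGraph (hP : Z.map (AddMonoidHom.fst A B) = P)
    (hQ : Z.map (AddMonoidHom.snd A B) = Q) :
    ∃ σ : P ⧸ (Z.comap (AddMonoidHom.inl A B)).addSubgroupOf P ≃+
      Q ⧸ (Z.comap (AddMonoidHom.inr A B)).addSubgroupOf Q, Z = quotientGraph σ := by
  subst hP hQ
  let f := ((QuotientAddGroup.mk' ((Z.comap (AddMonoidHom.inl A B)).addSubgroupOf _)).prodMap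
      (QuotientAddGroup.mk' ((Z.comap (AddMonoidHom.inr A B)).addSubgroupOf _))).comp
    (((AddMonoidHom.fst A B).addSubgroupMap Z).prod ((AddMonoidHom.snd A B).addSubgroupMap Z))
  obtain ⟨σ, hσ⟩ := f.exists_addEquiv_range_eq_graph
    ((QuotientAddGroup.mk'_surjective _).comp (AddMonoidHom.addSubgroupMap_surjective _ _))
    ((QuotientAddGroup.mk'_surjective _).comp (AddMonoidHom.addSubgroupMap_surjective _ _))
    (fun z₁ z₂ => by
      simpa [f, QuotientAddGroup.eq, mem_addSubgroupOf] using
        fst_mem_comap_inl_iff (add_mem (neg_mem z₁.2) z₂.2))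
  refine ⟨σ, eq_quotientGraph_of_le le_rfl fun x hx => ?_⟩
  have hfx : f ⟨x, hx⟩ ∈ σ.toAddMonoidHom.graph := hσ ▸ AddMonoidHom.mem_range.2 ⟨_, rfl⟩
  exact mem_quotientGraph.2 ⟨_, _, hfx⟩

end Goursat

end AddSubgroup

theorem Complex.mul_conj_eq_one_iff {z w : ℂ} (hw : ‖w‖ = 1) : z * conj w = 1 ↔ z = w := by
  rw [← Complex.inv_eq_conj hw, mul_inv_eq_one₀ (norm_ne_zero_iff.1 (hw ▸ one_ne_zero))]

namespace IsPairing

variable {G : Type*} [AddCommGroup G] {γ : G → G → ℂ} (hγ : IsPairing γ)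
include hγ

theorem zero_right (g : G) : γ g 0 = 1 := by
  have h := hγ.2.2 g 0 0
  rw [add_zero] at h
  exact (mul_left_cancel₀ (hγ.ne_zero g 0) (by rw [mul_one]; exact h)).symm

def addChar (g : G) : AddChar G ℂ where
  toFun := γ g
  map_zero_eq_one' := hγ.zero_right g
  map_add_eq_mul' := hγ.2.2 g

@[simp]
theorem addChar_apply (g h : G) : hγ.addChar g h = γ g h := rfl

theorem le_perp_perp (hsym : ∀ g h, γ g h = γ h g) (H : AddSubgroup G) :
    H ≤ perp γ hγ (perp γ hγ H) :=
  fun h hh k hk => hsym h k ▸ hk h hh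

variable [Fintype G] (hsym : ∀ g h, γ g h = γ h g) (hnd : ∀ g, (∀ h, γ g h = 1) → g = 0)
include hsym hnd

theorem card_perp_mul_card (H : AddSubgroup G) :
    Nat.card (perp γ hγ H) * Nat.card H = Nat.card G := by
  classical
  have hinner : ∀ k : G, ∑ d : H, γ k d = if k ∈ perp γ hγ H then (Nat.card H : ℂ) else 0 := by
    intro k
    have hψ : (hγ.addChar k).compAddMonoidHom H.subtype = 0 ↔ k ∈ perp γ hγ H := by
      rw [AddChar.eq_zero_iff]
      exact ⟨fun h d hd => h ⟨d, hd⟩, fun h d => h d d.2⟩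
    simpa [hψ, Nat.card_eq_fintype_card] using
      ((hγ.addChar k).compAddMonoidHom H.subtype).sum_eq_ite
  have houter : ∀ d : G, ∑ k : G, γ k d = if d = 0 then (Nat.card G : ℂ) else 0 := by
    intro d
    have hψ : hγ.addChar d = 0 ↔ d = 0 := by
      rw [AddChar.eq_zero_iff]
      exact ⟨hnd d, fun h k => h ▸ hγ.zero_left k⟩
    simpa [hψ, hsym _ d, Nat.card_eq_fintype_card] using (hγ.addChar d).sum_eq_ite
  have hcount : (Nat.card (perp γ hγ H) * Nat.card H : ℂ) = Nat.card G := calc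
    _ = ∑ k : G, ∑ d : H, γ k d := by
      simp [hinner, Finset.sum_ite, Nat.card_eq_fintype_card, Fintype.card_subtype]
    _ = ∑ d : H, ∑ k : G, γ k d := Finset.sum_comm
    _ = Nat.card G := by
      simp [houter]
  exact_mod_cast hcount

theorem perp_perp (H : AddSubgroup G) : perp γ hγ (perp γ hγ H) = H := by
  refine (AddSubgroup.eq_of_le_of_card_ge (hγ.le_perp_perp hsym H) ?_).symm
  have h₁ := hγ.card_perp_mul_card hsym hnd H
  have h₂ := hγ.card_perp_mul_card hsym hnd (perp γ hγ H)
  exact (Nat.eq_of_mul_eq_mul_right Nat.card_pos (h₂.trans (h₁.symm.trans (mul_comm _ _)))).le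

end IsPairing

section Lagrangian

open AddMonoidHom

variable {G : Type*} [AddCommGroup G] {γ : G → G → ℂ} (hγ : IsPairing γ)
  {Z : AddSubgroup (G × G)}
include hγ

theorem pairTwo_eq_one_iff {x y : G × G} : pairTwo γ x y = 1 ↔ γ x.1 y.1 = γ x.2 y.2 :=
  Complex.mul_conj_eq_one_iff (hγ.1 _ _)

theorem comap_inl_perp_pairTwo :
    (perp (pairTwo γ) hγ.pairTwo Z).comap (inl G G) = perp γ hγ (Z.map (fst G G)) := by
  ext g
  simp [perp, pairTwo_eq_one_iff hγ, hγ.zero_left]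

theorem comap_inr_perp_pairTwo :
    (perp (pairTwo γ) hγ.pairTwo Z).comap (inr G G) = perp γ hγ (Z.map (snd G G)) := by
  ext h
  simpa [perp, pairTwo_eq_one_iff hγ, hγ.zero_left, eq_comm] using forall_comm

theorem fst_mem_perp_comap_inl {x : G × G} (hx : x ∈ perp (pairTwo γ) hγ.pairTwo Z) :
    x.1 ∈ perp γ hγ (Z.comap (inl G G)) := fun d hd => by
  simpa [pairTwo_eq_one_iff hγ, hγ.zero_right] using hx _ hd

theorem perp_pairTwo_le (hiso : Z ≤ perp (pairTwo γ) hγ.pairTwo Z)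
    (hfst : perp γ hγ (Z.comap (inl G G)) ≤ Z.map (fst G G))
    (hsnd : perp γ hγ (Z.map (snd G G)) ≤ Z.comap (inr G G)) :
    perp (pairTwo γ) hγ.pairTwo Z ≤ Z := by
  rintro ⟨g, h⟩ hx
  obtain ⟨⟨_, h₀⟩, hgh₀, rfl⟩ := hfst (fst_mem_perp_comap_inl hγ hx)
  have hdiff : h - h₀ ∈ (perp (pairTwo γ) hγ.pairTwo Z).comap (inr G G) := by
    simpa using sub_mem hx (hiso hgh₀)
  rw [comap_inr_perp_pairTwo hγ] at hdiff
  simpa using add_mem hgh₀ (hsnd hdiff)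

variable [Fintype G] (hsym : ∀ g h, γ g h = γ h g) (hnd : ∀ g, (∀ h, γ g h = 1) → g = 0)
include hsym hnd

theorem map_fst_eq_perp_comap_inl (hZ : perp (pairTwo γ) hγ.pairTwo Z = Z) :
    Z.map (fst G G) = perp γ hγ (Z.comap (inl G G)) := by
  conv_rhs => rw [← hZ, comap_inl_perp_pairTwo hγ, hγ.perp_perp hsym hnd]

theorem map_snd_eq_perp_comap_inr (hZ : perp (pairTwo γ) hγ.pairTwo Z = Z) :
    Z.map (snd G G) = perp γ hγ (Z.comap (inr G G)) := by
  conv_rhs => rw [← hZ, comap_inr_perp_pairTwo hγ, hγ.perp_perp hsym hnd]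

end Lagrangian

namespace Realizes

variable {G : Type*} [AddCommGroup G] {q : G → ℂ} {γ : G → G → ℂ}
  (hq : Realizes q γ) (hγ : IsPairing γ)
include hq hγ

theorem map_zero : q 0 = 1 := by
  have h := hq.2.2 0 0
  rw [hγ.zero_left, add_zero, mul_assoc, (Complex.mul_conj_eq_one_iff (hq.1 0)).2 rfl,
    mul_one] at h
  exact h.symm

theorem le_perp {D : AddSubgroup G} (hD : ∀ g ∈ D, q g = 1) : D ≤ perp γ hγ D :=
  fun g hg d hd => by
    rw [hq.2.2, hD g hg, hD d hd, hD _ (add_mem hg hd), map_one, one_mul, one_mul]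

theorem le_perp_pairTwo {Z : AddSubgroup (G × G)} (hZ : ∀ x ∈ Z, q x.2 = q x.1) :
    Z ≤ perp (pairTwo γ) hγ.pairTwo Z := by
  intro x hx y hy
  have hxy : q (x.2 + y.2) = q (x.1 + y.1) := hZ _ (add_mem hx hy)
  rw [pairTwo_eq_one_iff hγ, hq.2.2, hq.2.2, hZ x hx, hZ y hy, hxy]

end Realizes

theorem perp_pairTwo_quotientGraph_eq_self {G : Type*} [AddCommGroup G] [Fintype G]
    {γ : G → G → ℂ} (hγ : IsPairing γ) (hsym : ∀ g h, γ g h = γ h g)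
    (hnd : ∀ g, (∀ h, γ g h = 1) → g = 0) {Dp Dm : AddSubgroup G}
    (hDp : Dp ≤ perp γ hγ Dp) (hDm : Dm ≤ perp γ hγ Dm)
    {σ : discQuot γ hγ Dp ≃+ discQuot γ hγ Dm}
    (hiso : AddSubgroup.quotientGraph σ ≤
      perp (pairTwo γ) hγ.pairTwo (AddSubgroup.quotientGraph σ)) :
    perp (pairTwo γ) hγ.pairTwo (AddSubgroup.quotientGraph σ) = AddSubgroup.quotientGraph σ := by
  refine le_antisymm (perp_pairTwo_le hγ hiso ?_ ?_) hiso
  · rw [AddSubgroup.comap_inl_quotientGraph hDp, AddSubgroup.map_fst_quotientGraph]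
  · rw [AddSubgroup.map_snd_quotientGraph, AddSubgroup.comap_inr_quotientGraph hDm,
      hγ.perp_perp hsym hnd]

/-- Theorem 3 ((i) ⟷ (iii) ⟷ (iv)): for a finite abelian group `G` with
non-degenerate symmetric pairing `⟨·,·⟩` realized by a quadratic form `q`, the
assignment `Z ↦ (D₊, D₋, σ)` — with `D₊ = {g : (g,0) ∈ Z}`, `D₋ = {h : (0,h) ∈ Z}`
and `σ(g + D₊) = h + D₋` whenever `(g,h) ∈ Z` — is a well-defined bijection from
the subgroups `Z ≤ G × G` with `Z^⊥ = Z` and `q₂|_Z = 1` onto the triples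
`(D₊, D₋, σ)` of subgroups on which `q` is trivial together with an isomorphism
`σ : D₊^⊥/D₊ → D₋^⊥/D₋` preserving `q`; its inverse sends `(D₊, D₋, σ)` to
`Z = {(g,h) ∈ D₊^⊥ × D₋^⊥ : σ(g + D₊) = h + D₋}`. -/
theorem stmt15 {G : Type*} [AddCommGroup G] [Fintype G]
    (γ : G → G → ℂ) (q : G → ℂ)
    (hγ : IsPairing γ) (hsym : ∀ g h, γ g h = γ h g)
    (hnd : ∀ g, (∀ h, γ g h = 1) → g = 0)
    (hq : Realizes q γ) :
    (∀ Z : AddSubgroup (G × G), perp (pairTwo γ) hγ.pairTwo Z = Z →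
      (∀ x ∈ Z, q x.1 * conj (q x.2) = 1) →
      (∀ g ∈ Z.comap (AddMonoidHom.inl G G), q g = 1) ∧
      (∀ h ∈ Z.comap (AddMonoidHom.inr G G), q h = 1) ∧
      (∀ g h : G, (g, h) ∈ Z →
        g ∈ perp γ hγ (Z.comap (AddMonoidHom.inl G G)) ∧
        h ∈ perp γ hγ (Z.comap (AddMonoidHom.inr G G))) ∧
      (∃! σ : discQuot γ hγ (Z.comap (AddMonoidHom.inl G G)) ≃+
          discQuot γ hγ (Z.comap (AddMonoidHom.inr G G)),
        ∀ (g h : G) (hgh : (g, h) ∈ Z)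
          (hg : g ∈ perp γ hγ (Z.comap (AddMonoidHom.inl G G)))
          (hh : h ∈ perp γ hγ (Z.comap (AddMonoidHom.inr G G))),
          σ (QuotientAddGroup.mk ⟨g, hg⟩) = QuotientAddGroup.mk ⟨h, hh⟩) ∧
      (∀ σ : discQuot γ hγ (Z.comap (AddMonoidHom.inl G G)) ≃+
          discQuot γ hγ (Z.comap (AddMonoidHom.inr G G)),
        (∀ (g h : G) (hgh : (g, h) ∈ Z)
          (hg : g ∈ perp γ hγ (Z.comap (AddMonoidHom.inl G G)))
          (hh : h ∈ perp γ hγ (Z.comap (AddMonoidHom.inr G G))),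
          σ (QuotientAddGroup.mk ⟨g, hg⟩) = QuotientAddGroup.mk ⟨h, hh⟩) →
        (∀ (g h : G) (hg : g ∈ perp γ hγ (Z.comap (AddMonoidHom.inl G G)))
          (hh : h ∈ perp γ hγ (Z.comap (AddMonoidHom.inr G G))),
          σ (QuotientAddGroup.mk ⟨g, hg⟩) = QuotientAddGroup.mk ⟨h, hh⟩ →
            q h = q g) ∧
        (∀ g h : G, (g, h) ∈ Z ↔
          ∃ (hg : g ∈ perp γ hγ (Z.comap (AddMonoidHom.inl G G)))
            (hh : h ∈ perp γ hγ (Z.comap (AddMonoidHom.inr G G))),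
            σ (QuotientAddGroup.mk ⟨g, hg⟩) = QuotientAddGroup.mk ⟨h, hh⟩))) ∧
    (∀ Dp Dm : AddSubgroup G, (∀ g ∈ Dp, q g = 1) → (∀ h ∈ Dm, q h = 1) →
      ∀ σ : discQuot γ hγ Dp ≃+ discQuot γ hγ Dm,
        (∀ (g h : G) (hg : g ∈ perp γ hγ Dp) (hh : h ∈ perp γ hγ Dm),
          σ (QuotientAddGroup.mk ⟨g, hg⟩) = QuotientAddGroup.mk ⟨h, hh⟩ →
            q h = q g) →
        ∃ Z : AddSubgroup (G × G),
          (∀ g h : G, (g, h) ∈ Z ↔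
            ∃ (hg : g ∈ perp γ hγ Dp) (hh : h ∈ perp γ hγ Dm),
              σ (QuotientAddGroup.mk ⟨g, hg⟩) = QuotientAddGroup.mk ⟨h, hh⟩) ∧
          perp (pairTwo γ) hγ.pairTwo Z = Z ∧
          (∀ x ∈ Z, q x.1 * conj (q x.2) = 1) ∧
          Z.comap (AddMonoidHom.inl G G) = Dp ∧
          Z.comap (AddMonoidHom.inr G G) = Dm) := by
  have hq₂ : ∀ x : G × G, q x.1 * conj (q x.2) = 1 ↔ q x.2 = q x.1 := fun x =>
    (Complex.mul_conj_eq_one_iff (hq.1 _)).trans eq_comm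
  refine ⟨fun Z hZ hqZ => ?_, fun Dp Dm hqp hqm σ hσ => ?_⟩
  · have hP := map_fst_eq_perp_comap_inl hγ hsym hnd hZ
    have hQ := map_snd_eq_perp_comap_inr hγ hsym hnd hZ
    obtain ⟨σ, hσ⟩ := AddSubgroup.exists_eq_quotientGraph hP hQ
    refine ⟨fun g hg => ?_, fun h hh => ?_, fun g h hgh => ⟨hP ▸ ⟨_, hgh, rfl⟩, hQ ▸ ⟨_, hgh, rfl⟩⟩,
      ⟨σ, (AddSubgroup.eq_quotientGraph_iff hP hQ).1 hσ, fun τ hτ => ?_⟩, fun τ hτ => ?_⟩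
    · simpa [hq.map_zero hγ] using ((hq₂ _).1 (hqZ _ hg)).symm
    · simpa [hq.map_zero hγ] using (hq₂ _).1 (hqZ _ hh)
    · exact AddSubgroup.quotientGraph_injective
        (((AddSubgroup.eq_quotientGraph_iff hP hQ).2 hτ).symm.trans hσ)
    · have hZτ := (AddSubgroup.eq_quotientGraph_iff hP hQ).2 hτ
      have hmem : ∀ g h, (g, h) ∈ Z ↔ _ := fun g h =>
        (SetLike.ext_iff.1 hZτ (g, h)).trans AddSubgroup.mem_quotientGraph
      exact ⟨fun g h hg hh hgh => (hq₂ _).1 (hqZ _ ((hmem g h).2 ⟨hg, hh, hgh⟩)), hmem⟩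
  · have hqZ : ∀ x ∈ AddSubgroup.quotientGraph σ, q x.2 = q x.1 := fun ⟨g, h⟩ hgh => by
      obtain ⟨hg, hh, hσgh⟩ := AddSubgroup.mem_quotientGraph.1 hgh
      exact hσ g h hg hh hσgh
    have hDp := hq.le_perp hγ hqp
    have hDm := hq.le_perp hγ hqm
    exact ⟨_, fun g h => AddSubgroup.mem_quotientGraph,
      perp_pairTwo_quotientGraph_eq_self hγ hsym hnd hDp hDm (hq.le_perp_pairTwo hγ hqZ),
      fun x hx => (hq₂ x).2 (hqZ x hx), AddSubgroup.comap_inl_quotientGraph hDp,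
      AddSubgroup.comap_inr_quotientGraph hDm⟩
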